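/- arXiv:1010.3484 — 5 statements merged into one kernel-verified Lean document; each statement's English description precedes it below -/
import Mathlib

section
/- Fix integers d ≥ 1, n ≥ 2 and i ∈ [n], and set β = 1/log n and δ = 2^{−n²}. The polynomial f(x) = x_i − (x_{n+i})^d passes the dictator test T_d with probability at least 1 − β; that is, with probability at least 1 − β over the sample (a, h, g, b) of the test, sgn(f(y)) = b. -/
open MeasureTheory ProbabilityTheory Real
open scoped ENNReal NNReal

/-- Evaluation of a polynomial given by its (finitely supported) coefficient
function on multisets of variable indices. -/
noncomputable def polyEval {ι : Type*} (c : Multiset ι →₀ ℝ) (x : ι → ℝ) : ℝ :=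
  ∑ S ∈ c.support, c S * (S.map x).prod

/-- Bernoulli measure on `Bool` with `Pr[true] = p`. -/
noncomputable def bernoulliBool (p : ℝ) : Measure Bool :=
  ENNReal.ofReal p • Measure.dirac true + ENNReal.ofReal (1 - p) • Measure.dirac false

/-- Uniform measure on the signs `{-1, 1} ⊆ ℝ`. -/
noncomputable def signUnif : Measure ℝ :=
  (2 : ℝ≥0∞)⁻¹ • Measure.dirac 1 + (2 : ℝ≥0∞)⁻¹ • Measure.dirac (-1)

/-- Product of `n` independent standard Gaussians. -/
noncomputable def stdGaussianPi (n : ℕ) : Measure (Fin n → ℝ) :=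
  Measure.pi fun _ => gaussianReal 0 1

/-- The sample distribution of the dictator test `T_d`: `n` independent
Bernoulli(β) bits `a`, two vectors `h, g` of `n` i.i.d. standard Gaussians, and a
uniform random sign `b ∈ {-1, 1}`, where `β = 1 / log n`. -/
noncomputable def TdMeasure (n : ℕ) :
    Measure ((Fin n → Bool) × (Fin n → ℝ) × (Fin n → ℝ) × ℝ) :=
  (Measure.pi fun _ : Fin n => bernoulliBool (1 / Real.log n)).prod
    ((stdGaussianPi n).prod ((stdGaussianPi n).prod signUnif))

/-- The query point `y ∈ ℝ^{2n}` of the dictator test `T_d`: coordinates are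
indexed by `Fin n ⊕ Fin n` (`Sum.inl i` is coordinate `i`, `Sum.inr i` is
coordinate `n + i`), with `y_i = a_i h_i + g_i ^ d + b δ` and `y_{n+i} = g_i`,
where `δ = 2 ^ (-n²)`. -/
noncomputable def TdPoint (d n : ℕ)
    (ω : (Fin n → Bool) × (Fin n → ℝ) × (Fin n → ℝ) × ℝ) : Fin n ⊕ Fin n → ℝ :=
  Sum.elim
    (fun i => (if ω.1 i then ω.2.1 i else 0) + (ω.2.2.1 i) ^ d
      + ω.2.2.2 * (2 : ℝ) ^ (-((n : ℤ) ^ 2)))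
    fun i => ω.2.2.1 i

lemma bernoulli_prob {p : ℝ} (h0 : 0 ≤ p) (h1 : p ≤ 1) :
    IsProbabilityMeasure (bernoulliBool p) := by
  constructor
  simp only [bernoulliBool, Measure.add_apply, Measure.smul_apply, Measure.dirac_apply_of_mem
    (Set.mem_univ _), smul_eq_mul, mul_one]
  rw [← ENNReal.ofReal_add h0 (by linarith)]
  norm_num

lemma signUnif_prob : IsProbabilityMeasure signUnif := by
  constructor
  simp only [signUnif, Measure.add_apply, Measure.smul_apply, Measure.dirac_apply_of_mem
    (Set.mem_univ _), smul_eq_mul, mul_one]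
  exact ENNReal.inv_two_add_inv_two

/-- Completeness of the dictator test `T_d`: the polynomial
`f(x) = x_i - x_{n+i} ^ d` passes the test with probability at least `1 - β`,
where `β = 1 / log n`. -/
theorem stmt0 (d n : ℕ) (hd : 1 ≤ d) (hn : 2 ≤ n) (i : Fin n) :
    ENNReal.ofReal (1 - 1 / Real.log n) ≤
      TdMeasure n {ω | Real.sign
        ((fun x : Fin n ⊕ Fin n → ℝ => x (Sum.inl i) - (x (Sum.inr i)) ^ d)
          (TdPoint d n ω)) = ω.2.2.2} := by
  set β : ℝ := 1 / Real.log n with hβ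
  rcases le_or_gt (1 - β) 0 with hneg | hpos
  · rw [ENNReal.ofReal_eq_zero.mpr hneg]; exact zero_le
  have hlog : 0 < Real.log n := by
    apply Real.log_pos; exact_mod_cast by omega
  have hβ0 : 0 ≤ β := by positivity
  have hβ1 : β ≤ 1 := by linarith
  have hBp : IsProbabilityMeasure (bernoulliBool β) := bernoulli_prob hβ0 hβ1
  have hSp : IsProbabilityMeasure signUnif := signUnif_prob
  have hGp : IsProbabilityMeasure (stdGaussianPi n) := by
    constructor
    simp [stdGaussianPi, Measure.pi_univ]
  -- the good set
  set A : Set (Fin n → Bool) := Set.univ.pi (fun j => if j = i then {false} else Set.univ)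
    with hA
  set B : Set ((Fin n → ℝ) × (Fin n → ℝ) × ℝ) :=
    Set.univ ×ˢ (Set.univ ×ˢ ({1, -1} : Set ℝ)) with hB
  have hδ : (0:ℝ) < (2 : ℝ) ^ (-((n : ℤ) ^ 2)) := by positivity
  have hsub : A ×ˢ B ⊆ {ω : (Fin n → Bool) × (Fin n → ℝ) × (Fin n → ℝ) × ℝ | Real.sign
        ((fun x : Fin n ⊕ Fin n → ℝ => x (Sum.inl i) - (x (Sum.inr i)) ^ d)
          (TdPoint d n ω)) = ω.2.2.2} := by
    rintro ⟨a, h, g, b⟩ ⟨ha, -, -, hb⟩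
    have hai : a i = false := by
      have := ha i (Set.mem_univ i)
      simpa using this
    have hx : (TdPoint d n (a, h, g, b)) (Sum.inl i)
        - ((TdPoint d n (a, h, g, b)) (Sum.inr i)) ^ d
        = b * (2 : ℝ) ^ (-((n : ℤ) ^ 2)) := by
      simp [TdPoint, hai]
    simp only [Set.mem_setOf_eq, hx]
    rcases hb with hb | hb <;> subst hb
    · rw [one_mul]; exact Real.sign_of_pos hδ
    · rw [neg_one_mul]; exact Real.sign_of_neg (by linarith)
  refine le_trans ?_ (measure_mono hsub)
  rw [TdMeasure, ← hβ, Measure.prod_prod]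
  have hBmeas : ((stdGaussianPi n).prod ((stdGaussianPi n).prod signUnif)) B = 1 := by
    rw [hB, Measure.prod_prod, Measure.prod_prod]
    have : signUnif ({1, -1} : Set ℝ) = 1 := by
      simp only [signUnif, Measure.add_apply, Measure.smul_apply,
        Measure.dirac_apply_of_mem (show (1:ℝ) ∈ ({1,-1}:Set ℝ) by simp),
        Measure.dirac_apply_of_mem (show (-1:ℝ) ∈ ({1,-1}:Set ℝ) by simp),
        smul_eq_mul, mul_one]
      exact ENNReal.inv_two_add_inv_two
    simp [this]
  rw [hBmeas, mul_one]
  have hAmeas : (Measure.pi fun _ : Fin n => bernoulliBool β) A = ENNReal.ofReal (1 - β) := by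
    rw [hA, Measure.pi_pi]
    have hfalse : bernoulliBool β ({false} : Set Bool) = ENNReal.ofReal (1 - β) := by
      simp [bernoulliBool, Measure.dirac_apply_of_mem (show false ∈ ({false}:Set Bool) by simp),
        Measure.dirac_apply' _ (MeasurableSet.singleton false)]
    calc (∏ j, bernoulliBool β (if j = i then {false} else Set.univ))
        = ∏ j, (if j = i then ENNReal.ofReal (1 - β) else 1) := by
          refine Finset.prod_congr rfl fun j _ => ?_
          split
          · simp [hfalse]
          · exact measure_univ
      _ = ENNReal.ofReal (1 - β) := by simp
  rw [hAmeas]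
end

section
/- Fix integers d ≥ 1 and n ≥ 1. Let S_0 ≠ S_1 be multisets over [2n], each of size at most d. Suppose that the formal identity ∏_{i ∈ S_0 ∩ [n]} g_i^d · ∏_{j ∈ [n] : (n+j) ∈ S_0} g_j = ∏_{i ∈ S_1 ∩ [n]} g_i^d · ∏_{j ∈ [n] : (n+j) ∈ S_1} g_j holds in the polynomial ring ℝ[g_1,…,g_n], where each product is taken with multiplicity according to the multiset. Then there exists ℓ ∈ [n] such that S_0 = {ℓ} and S_1 = {n+ℓ : d} (the multiset with d copies of n+ℓ), or vice versa. -/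
open MvPolynomial


lemma X_eq_mono {n : ℕ} (j : Fin n) :
    (X j : MvPolynomial (Fin n) ℝ) = monomial (Finsupp.single j 1) 1 := rfl

lemma prod_eq_monomial (d n : ℕ) (S : Multiset (Fin n ⊕ Fin n)) :
    (S.map (Sum.elim (fun i => (X i : MvPolynomial (Fin n) ℝ) ^ d) fun j => X j)).prod =
      monomial (S.map (Sum.elim (fun i => Finsupp.single i d)
        (fun j => Finsupp.single j 1))).sum 1 := by
  induction S using Multiset.induction with
  | empty => simp
  | cons a s ih =>
      rcases a with i | j <;>
        rw [Multiset.map_cons, Multiset.prod_cons, ih, Multiset.map_cons, Multiset.sum_cons]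
      · rw [Sum.elim_inl, Sum.elim_inl, X_pow_eq_monomial, monomial_mul, one_mul]
      · rw [Sum.elim_inr, Sum.elim_inr, X_eq_mono, monomial_mul, one_mul]

lemma sum_apply_eq (d n : ℕ) (S : Multiset (Fin n ⊕ Fin n)) (k : Fin n) :
    ((S.map (Sum.elim (fun i => Finsupp.single i d)
        (fun j => Finsupp.single j 1))).sum) k
      = d * S.count (Sum.inl k) + S.count (Sum.inr k) := by
  induction S using Multiset.induction with
  | empty => simp
  | cons a s ih =>
      rcases a with i | j <;>
        simp [ih, Multiset.count_cons, Finsupp.single_apply, Finsupp.add_apply,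
          mul_add, mul_ite, mul_one, mul_zero] <;>
        split_ifs <;> omega

lemma counts_aux (d n : ℕ) (hd : 1 ≤ d)
    (S₀ S₁ : Multiset (Fin n ⊕ Fin n))
    (h₀ : Multiset.card S₀ ≤ d) (h₁ : Multiset.card S₁ ≤ d)
    (E : ∀ k : Fin n, d * S₀.count (Sum.inl k) + S₀.count (Sum.inr k)
        = d * S₁.count (Sum.inl k) + S₁.count (Sum.inr k))
    (k : Fin n) (hk : S₁.count (Sum.inl k) < S₀.count (Sum.inl k)) :
    S₀ = {Sum.inl k} ∧ S₁ = Multiset.replicate d (Sum.inr k) := by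
  have hb₁ : S₁.count (Sum.inr k) ≤ d :=
    le_trans (Multiset.count_le_card _ _) h₁
  have e := E k
  have h1 : d * S₁.count (Sum.inl k) + d ≤ d * S₀.count (Sum.inl k) := by
    have h2 : d * (S₁.count (Sum.inl k) + 1) ≤ d * S₀.count (Sum.inl k) :=
      Nat.mul_le_mul_left d hk
    rw [Nat.mul_add, Nat.mul_one] at h2
    exact h2
  have hb1d : S₁.count (Sum.inr k) = d := by omega
  have hb0 : S₀.count (Sum.inr k) = 0 := by omega
  -- S₁ is d copies of inr k
  have hcard1 : Multiset.card S₁ = d :=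
    le_antisymm h₁ (hb1d ▸ Multiset.count_le_card _ _)
  have hall1 : ∀ x ∈ S₁, Sum.inr k = x :=
    Multiset.count_eq_card.mp (hb1d.trans hcard1.symm)
  have hS₁ : S₁ = Multiset.replicate d (Sum.inr k) :=
    Multiset.eq_replicate.2 ⟨hcard1, fun b hb => (hall1 b hb).symm⟩
  refine ⟨?_, hS₁⟩
  have c1 : ∀ x, S₁.count x = if Sum.inr k = x then d else 0 := fun x => by
    rw [hS₁, Multiset.count_replicate]
  have ha1 : S₁.count (Sum.inl k) = 0 := by rw [c1]; simp
  rw [ha1, hb1d, Nat.mul_zero, Nat.zero_add, hb0, Nat.add_zero] at e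
  have ha0 : S₀.count (Sum.inl k) = 1 :=
    Nat.eq_of_mul_eq_mul_left hd (by omega)
  have hall0 : ∀ x ∈ S₀, x = Sum.inl k := by
    intro x hx
    have hpos := Multiset.count_pos.mpr hx
    rcases x with i | j
    · by_contra h
      have hik : i ≠ k := fun h' => h (by rw [h'])
      have e2 := E i
      rw [c1, c1, if_neg (by simp), if_neg (by simp [hik.symm])] at e2
      have hz : S₀.count (Sum.inl i) = 0 := by
        rcases Nat.mul_eq_zero.mp (show d * S₀.count (Sum.inl i) = 0 by omega) with h' | h'
        · omega
        · exact h'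
      omega
    · exfalso
      rcases eq_or_ne j k with rfl | hjk
      · omega
      · have e2 := E j
        rw [c1, c1, if_neg (by simp), if_neg (by simp [hjk.symm])] at e2
        omega
  have hcard0 : Multiset.card S₀ = 1 := by
    have := Multiset.count_eq_card.mpr (fun x hx => (hall0 x hx).symm)
    omega
  have : S₀ = Multiset.replicate 1 (Sum.inl k) :=
    Multiset.eq_replicate.2 ⟨hcard0, hall0⟩
  simpa using this

/-- Claim 3.5: if two distinct multisets `S₀ ≠ S₁` of size at most `d` over the
`2n` variable indices (indexed by `Fin n ⊕ Fin n`, where `Sum.inl i` is variable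
`i` and `Sum.inr j` is variable `n + j`) give rise to the same monomial in
`ℝ[g_1, …, g_n]` under the substitution `x_i ↦ g_i ^ d`, `x_{n+j} ↦ g_j`, then
for some `ℓ ∈ [n]` one of them is `{ℓ}` and the other is the multiset of `d`
copies of `n + ℓ`. -/
theorem stmt3 (d n : ℕ) (hd : 1 ≤ d) (hn : 1 ≤ n)
    (S₀ S₁ : Multiset (Fin n ⊕ Fin n)) (hne : S₀ ≠ S₁)
    (h₀ : Multiset.card S₀ ≤ d) (h₁ : Multiset.card S₁ ≤ d)
    (heq :
      (S₀.map (Sum.elim (fun i => (X i : MvPolynomial (Fin n) ℝ) ^ d) fun j => X j)).prod =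
      (S₁.map (Sum.elim (fun i => (X i : MvPolynomial (Fin n) ℝ) ^ d) fun j => X j)).prod) :
    ∃ ℓ : Fin n,
      (S₀ = {Sum.inl ℓ} ∧ S₁ = Multiset.replicate d (Sum.inr ℓ)) ∨
      (S₁ = {Sum.inl ℓ} ∧ S₀ = Multiset.replicate d (Sum.inr ℓ)) := by
  rw [prod_eq_monomial, prod_eq_monomial] at heq
  have hfe := monomial_left_injective (one_ne_zero (α := ℝ)) heq
  have E : ∀ k : Fin n, d * S₀.count (Sum.inl k) + S₀.count (Sum.inr k)
      = d * S₁.count (Sum.inl k) + S₁.count (Sum.inr k) := by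
    intro k
    rw [← sum_apply_eq, ← sum_apply_eq, hfe]
  obtain ⟨s, hs⟩ : ∃ s, S₀.count s ≠ S₁.count s := by
    by_contra h
    push_neg at h
    exact hne (Multiset.ext.2 h)
  have hk : ∃ k : Fin n, S₀.count (Sum.inl k) ≠ S₁.count (Sum.inl k) := by
    rcases s with k | k
    · exact ⟨k, hs⟩
    · refine ⟨k, fun h => hs ?_⟩
      have e2 := E k
      rw [h] at e2
      omega
  obtain ⟨k, hk⟩ := hk
  rcases lt_or_gt_of_ne hk with h | h
  · obtain ⟨hA, hB⟩ := counts_aux d n hd S₁ S₀ h₁ h₀ (fun k => (E k).symm) k h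
    exact ⟨k, Or.inr ⟨hA, hB⟩⟩
  · obtain ⟨hA, hB⟩ := counts_aux d n hd S₀ S₁ h₀ h₁ E k h
    exact ⟨k, Or.inl ⟨hA, hB⟩⟩
end

section
/- For every n ≥ 2 and every i ∈ [n], the polynomial f(x) = x_i passes the dictator test T_2 with probability at least 1 − β, where β = 1/log n; that is, with probability at least 1 − β over the sample of the test, sgn(f(y)) = b. -/
open MeasureTheory ProbabilityTheory Real
open scoped ENNReal NNReal

/-- The uniform probability measure on a finite set. -/
noncomputable def uniformFinset {α : Type*} [MeasurableSpace α] (s : Finset α) : Measure α :=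
  (s.card : ℝ≥0∞)⁻¹ • ∑ a ∈ s, Measure.dirac a

/-- The sample distribution of the dictator test `T₂`: `n` independent
Bernoulli(β) bits `a` with `β = 1/log n`, `n` i.i.d. standard Gaussians `g`, a
uniform exponent `i ∈ {1, …, (log n)²}`, and a uniform sign `b ∈ {-1, 1}`. -/
noncomputable def T2Measure (n : ℕ) :
    Measure ((Fin n → Bool) × (Fin n → ℝ) × ℕ × ℝ) :=
  (Measure.pi fun _ : Fin n => bernoulliBool (1 / Real.log n)).prod
    ((stdGaussianPi n).prod
      ((uniformFinset (Finset.Icc 1 ⌊(Real.log n) ^ 2⌋₊)).prod signUnif))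

/-- The query point `y = t³ r + b t² δ ω` of the dictator test `T₂`, where
`r = (a₁ g₁, …, aₙ gₙ)`, `t = n^i`, `δ = 2^{-n}` and `ω = (1, …, 1)`. -/
noncomputable def T2Point (n : ℕ) (ω : (Fin n → Bool) × (Fin n → ℝ) × ℕ × ℝ) :
    Fin n → ℝ :=
  fun j => ((n : ℝ) ^ ω.2.2.1) ^ 3 * (if ω.1 j then ω.2.1 j else 0)
    + ω.2.2.2 * ((n : ℝ) ^ ω.2.2.1) ^ 2 * (2 : ℝ) ^ (-(n : ℤ))

instance (p : ℝ) : IsFiniteMeasure (bernoulliBool p) := by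
  constructor
  simp [bernoulliBool]

instance : IsFiniteMeasure signUnif := by
  constructor
  simp [signUnif]

instance {α : Type*} [MeasurableSpace α] (s : Finset α) :
    SFinite (uniformFinset s) := by
  have : IsFiniteMeasure (∑ a ∈ s, (Measure.dirac a : Measure α)) := by
    constructor
    simp [Measure.finset_sum_apply]
  unfold uniformFinset
  infer_instance

instance (n : ℕ) : IsProbabilityMeasure (stdGaussianPi n) := by
  unfold stdGaussianPi; infer_instance

lemma bernoulliBool_univ (p : ℝ) (h0 : 0 ≤ p) (h1 : p ≤ 1) :
    bernoulliBool p Set.univ = 1 := by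
  simp only [bernoulliBool, Measure.add_apply, Measure.smul_apply, measure_univ,
    smul_eq_mul, mul_one, ← ENNReal.ofReal_add h0 (by linarith : (0:ℝ) ≤ 1 - p)]
  norm_num

lemma bernoulliBool_false (p : ℝ) : bernoulliBool p {false} = ENNReal.ofReal (1 - p) := by
  simp [bernoulliBool, Measure.dirac_apply]

/-- Completeness of the dictator test `T₂` (Lemma 5.1): for `n ≥ 2` and
`i ∈ [n]`, the polynomial `f(x) = x_i` passes `T₂` with probability at least
`1 - β`, where `β = 1/log n`. -/
theorem stmt12 (n : ℕ) (hn : 2 ≤ n) (i : Fin n) :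
    ENNReal.ofReal (1 - 1 / Real.log n) ≤
      T2Measure n {ω | Real.sign
        ((fun x : Fin n → ℝ => x i) (T2Point n ω)) = ω.2.2.2} := by
  rcases eq_or_lt_of_le hn with h2 | h3
  · -- n = 2 : LHS = 0
    have hlog : Real.log n < 1 := by
      rw [← h2]
      have := Real.log_two_lt_d9
      norm_num at this ⊢
      linarith
    have hlogpos : 0 < Real.log n := by
      rw [← h2]; positivity
    rw [ENNReal.ofReal_of_nonpos]
    · exact zero_le
    · rw [sub_nonpos, le_div_iff₀ hlogpos, one_mul]
      exact hlog.le
  · -- n ≥ 3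
    have h3 : 3 ≤ n := h3
    have hlog1 : 1 < Real.log n := by
      rw [Real.lt_log_iff_exp_lt (by positivity)]
      calc Real.exp 1 < 2.7182818286 := Real.exp_one_lt_d9
        _ < 3 := by norm_num
        _ ≤ (n : ℝ) := by exact_mod_cast h3
    set β : ℝ := 1 / Real.log n with hβ
    have hβ0 : 0 ≤ β := by positivity
    have hβ1 : β ≤ 1 := by
      rw [hβ, div_le_one (by linarith)]; linarith
    set m := ⌊(Real.log n) ^ 2⌋₊ with hm
    have hm1 : 1 ≤ m := by
      rw [hm, Nat.le_floor_iff (by positivity)]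
      push_cast
      nlinarith
    have hnpos : (0:ℝ) < n := by positivity
    -- the subset
    set S : Set ((Fin n → Bool) × (Fin n → ℝ) × ℕ × ℝ) :=
      {a | a i = false} ×ˢ (Set.univ ×ˢ (Set.univ ×ˢ ({1, -1} : Set ℝ))) with hS
    have hsub : S ⊆ {ω | Real.sign
        ((fun x : Fin n → ℝ => x i) (T2Point n ω)) = ω.2.2.2} := by
      rintro ⟨a, g, k, b⟩ ⟨ha, -, -, hb⟩
      simp only [Set.mem_setOf_eq] at ha ⊢
      have hc : (0:ℝ) < ((n : ℝ) ^ k) ^ 2 * (2 : ℝ) ^ (-(n : ℤ)) := by positivity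
      have hy : T2Point n (a, g, k, b) i = b * (((n : ℝ) ^ k) ^ 2 * (2 : ℝ) ^ (-(n : ℤ))) := by
        simp [T2Point, ha]; ring
      simp only [hy]
      rcases hb with hb | hb <;> subst hb
      · rw [one_mul, Real.sign_of_pos hc]
      · rw [neg_one_mul, Real.sign_of_neg (by linarith)]
    refine le_trans (le_of_eq ?_) (le_trans (measure_mono hsub) le_rfl)
    -- compute measure of S
    rw [hS, T2Measure, Measure.prod_prod, Measure.prod_prod, Measure.prod_prod]
    have e1 : (Measure.pi fun _ : Fin n => bernoulliBool (1 / Real.log n))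
        {a | a i = false} = ENNReal.ofReal (1 - β) := by
      have hset : {a : Fin n → Bool | a i = false} =
          Set.pi Set.univ (fun j => if j = i then {false} else Set.univ) := by
        ext a
        simp only [Set.mem_setOf_eq, Set.mem_pi, Set.mem_univ, forall_true_left]
        constructor
        · intro h j
          by_cases hj : j = i <;> simp [hj, h]
        · intro h
          have := h i
          simpa using this
      rw [hset, Measure.pi_pi, Finset.prod_eq_single i]
      · rw [if_pos rfl, bernoulliBool_false]
      · intro j _ hj
        rw [if_neg hj]
        exact bernoulliBool_univ _ hβ0 hβ1
      · simp
    have e2 : stdGaussianPi n Set.univ = 1 := by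
      simp [stdGaussianPi]
    have e3 : uniformFinset (Finset.Icc 1 m) Set.univ = 1 := by
      have hcard : (Finset.Icc 1 m).card = m := by simp
      rw [uniformFinset, Measure.smul_apply, Measure.finset_sum_apply]
      simp only [measure_univ, Measure.dirac_apply, Set.mem_univ, Set.indicator_of_mem,
        Pi.one_apply, Finset.sum_const, smul_eq_mul, mul_one, hcard]
      rw [nsmul_eq_mul, mul_one]
      exact ENNReal.inv_mul_cancel (by exact_mod_cast Nat.one_le_iff_ne_zero.mp hm1)
        (ENNReal.natCast_ne_top m)
    have e4 : signUnif ({1, -1} : Set ℝ) = 1 := by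
      rw [signUnif, Measure.add_apply, Measure.smul_apply, Measure.smul_apply,
        Measure.dirac_apply' _ (by measurability), Measure.dirac_apply' _ (by measurability)]
      simp [Set.indicator_of_mem]
      rw [ENNReal.inv_two_add_inv_two]
    rw [e1, e2, e3, e4]
    simp
end

section
/- For all sufficiently large n the following holds. Let f_1(x) = Σ_{i=1}^n c_i x_i be a linear form on ℝ^n, set A = Σ_{i=1}^n c_i, β = 1/log n, δ = 2^{−n}, and I = {i ∈ [n] : c_i > A/n²}. Let r = (a_1 g_1, …, a_n g_n), where a_1,…,a_n are independent {0,1} bits with Pr[a_i=1] = β and g_1,…,g_n are i.i.d. standard N(0,1) Gaussians independent of the a_i. If A ≤ 0 or |I| ≥ 1/β², then Pr_r[f_1(r) ∈ (−δA, δA)] ≤ 2/n. -/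
open MeasureTheory ProbabilityTheory Real
open scoped ENNReal NNReal

lemma gaussian_Ioo_le (a b : ℝ) :
    gaussianReal 0 1 (Set.Ioo a b) ≤ ENNReal.ofReal ((b - a) / Real.sqrt (2 * Real.pi)) := by
  rw [gaussianReal_apply 0 one_ne_zero]
  have hbd : ∀ x, gaussianPDF 0 1 x ≤ ENNReal.ofReal ((Real.sqrt (2 * Real.pi))⁻¹) := by
    intro x
    rw [gaussianPDF]
    apply ENNReal.ofReal_le_ofReal
    rw [gaussianPDFReal]
    simp only [NNReal.coe_one, mul_one]
    have h1 : rexp (-(x - 0) ^ 2 / 2) ≤ 1 := by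
      rw [Real.exp_le_one_iff]
      nlinarith [sq_nonneg (x - 0)]
    have h2 : (0:ℝ) ≤ (Real.sqrt (2 * Real.pi))⁻¹ := by positivity
    exact mul_le_of_le_one_right h2 h1
  calc ∫⁻ x in Set.Ioo a b, gaussianPDF 0 1 x
      ≤ ∫⁻ _ in Set.Ioo a b, ENNReal.ofReal ((Real.sqrt (2 * Real.pi))⁻¹) :=
        lintegral_mono fun x => hbd x
    _ = ENNReal.ofReal ((Real.sqrt (2 * Real.pi))⁻¹) * volume (Set.Ioo a b) := by
        rw [setLIntegral_const]
    _ ≤ ENNReal.ofReal ((b - a) / Real.sqrt (2 * Real.pi)) := by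
        rw [Real.volume_Ioo, ← ENNReal.ofReal_mul (by positivity)]
        apply ENNReal.ofReal_le_ofReal
        rw [div_eq_mul_inv, mul_comm]

lemma gauss_slab (c t ε : ℝ) (hc : 0 < c) :
    gaussianReal 0 1 {x | c * x + t ∈ Set.Ioo (-ε) ε} ≤
      ENNReal.ofReal (2 * ε / (c * Real.sqrt (2 * Real.pi))) := by
  have hset : {x | c * x + t ∈ Set.Ioo (-ε) ε}
      = Set.Ioo ((-ε - t) / c) ((ε - t) / c) := by
    ext x
    simp only [Set.mem_setOf_eq, Set.mem_Ioo, div_lt_iff₀ hc, lt_div_iff₀ hc]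
    constructor <;> rintro ⟨h1, h2⟩ <;> constructor <;> nlinarith
  rw [hset]
  refine le_trans (gaussian_Ioo_le _ _) (ENNReal.ofReal_le_ofReal ?_)
  have : (ε - t) / c - (-ε - t) / c = 2 * ε / c := by field_simp; ring
  rw [this, div_div]

lemma gauss_pi_slab (m : ℕ) (b : Fin (m + 1) → ℝ) (i : Fin (m + 1)) (κ ε : ℝ)
    (hκ : 0 < κ) (hb : κ ≤ b i) :
    stdGaussianPi (m + 1) {g | (∑ j, b j * g j) ∈ Set.Ioo (-ε) ε} ≤
      ENNReal.ofReal (2 * ε / (κ * Real.sqrt (2 * Real.pi))) := by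
  have hSmeas : MeasurableSet {g : Fin (m + 1) → ℝ | (∑ j, b j * g j) ∈ Set.Ioo (-ε) ε} := by
    apply measurableSet_preimage _ measurableSet_Ioo
    exact Finset.measurable_sum _ fun j _ => (measurable_pi_apply j).const_mul _
  have hmp := (measurePreserving_piFinSuccAbove (fun _ : Fin (m + 1) => gaussianReal 0 1) i).symm
  rw [stdGaussianPi, ← hmp.measure_preimage hSmeas.nullMeasurableSet]
  have hpre : (MeasurableEquiv.piFinSuccAbove (fun _ : Fin (m + 1) => ℝ) i).symm ⁻¹'
      {g : Fin (m + 1) → ℝ | (∑ j, b j * g j) ∈ Set.Ioo (-ε) ε}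
      = {p : ℝ × (Fin m → ℝ) |
          b i * p.1 + (∑ j, b (i.succAbove j) * p.2 j) ∈ Set.Ioo (-ε) ε} := by
    ext ⟨x, y⟩
    simp only [Set.mem_preimage, Set.mem_setOf_eq, MeasurableEquiv.piFinSuccAbove,
      MeasurableEquiv.symm_mk, MeasurableEquiv.coe_mk, Equiv.symm_symm, Fin.insertNthEquiv_apply]
    have hsum : (∑ j, b j * Fin.insertNth (α := fun _ : Fin (m+1) => ℝ) i x y j)
        = b i * x + ∑ j, b (i.succAbove j) * y j := by
      rw [Fin.sum_univ_succAbove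
        (f := fun j => b j * Fin.insertNth (α := fun _ : Fin (m+1) => ℝ) i x y j) (x := i)]
      simp
    show (∑ j, b j * Fin.insertNth (α := fun _ : Fin (m+1) => ℝ) i x y j) ∈ Set.Ioo (-ε) ε ↔ _
    rw [hsum]
  rw [hpre]
  have hmeas2 : MeasurableSet {p : ℝ × (Fin m → ℝ) |
      b i * p.1 + (∑ j, b (i.succAbove j) * p.2 j) ∈ Set.Ioo (-ε) ε} := by
    apply measurableSet_preimage _ measurableSet_Ioo
    exact ((measurable_fst.const_mul _).add
      (Finset.measurable_sum _ fun j _ => ((measurable_pi_apply j).comp measurable_snd).const_mul _))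
  rw [Measure.prod_apply_symm hmeas2]
  calc ∫⁻ y, gaussianReal 0 1 ((fun x => (x, y)) ⁻¹'
        {p : ℝ × (Fin m → ℝ) |
          b i * p.1 + (∑ j, b (i.succAbove j) * p.2 j) ∈ Set.Ioo (-ε) ε})
        ∂(Measure.pi fun _ : Fin m => gaussianReal 0 1)
      ≤ ∫⁻ _, ENNReal.ofReal (2 * ε / (κ * Real.sqrt (2 * Real.pi)))
        ∂(Measure.pi fun _ : Fin m => gaussianReal 0 1) := by
        apply lintegral_mono
        intro y
        refine le_trans (gauss_slab (b i) (∑ j, b (i.succAbove j) * y j) ε (lt_of_lt_of_le hκ hb))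
          ?_
        rcases le_or_gt 0 ε with hε | hε
        · apply ENNReal.ofReal_le_ofReal
          have hsq := Real.sqrt_pos.mpr (by positivity : (0:ℝ) < 2 * Real.pi)
          apply div_le_div_of_nonneg_left (by linarith) (by positivity)
          nlinarith
        · have h2 : 2 * ε / (b i * Real.sqrt (2 * Real.pi)) ≤ 0 :=
            div_nonpos_of_nonpos_of_nonneg (by linarith)
              (mul_nonneg (by linarith) (Real.sqrt_nonneg _))
          rw [ENNReal.ofReal_eq_zero.mpr h2]
          exact zero_le
    _ = ENNReal.ofReal (2 * ε / (κ * Real.sqrt (2 * Real.pi))) := by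
        rw [lintegral_const, measure_univ, mul_one]

lemma bernoulliBool_prob (p : ℝ) (h0 : 0 ≤ p) (h1 : p ≤ 1) :
    IsProbabilityMeasure (bernoulliBool p) := by
  constructor
  simp only [bernoulliBool, Measure.add_apply, Measure.smul_apply, Measure.dirac_apply,
    smul_eq_mul]
  simp only [Set.mem_univ, Set.indicator_of_mem, Pi.one_apply, mul_one]
  rw [← ENNReal.ofReal_add h0 (by linarith)]
  norm_num

lemma bern_pi_allfalse (n : ℕ) (p : ℝ) (h0 : 0 ≤ p) (h1 : p ≤ 1) (I : Finset (Fin n)) :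
    Measure.pi (fun _ : Fin n => bernoulliBool p) {a | ∀ i ∈ I, a i = false}
      = ENNReal.ofReal (1 - p) ^ I.card := by
  haveI := bernoulliBool_prob p h0 h1
  have hset : {a : Fin n → Bool | ∀ i ∈ I, a i = false}
      = Set.pi Set.univ (fun i => if i ∈ I then {false} else Set.univ) := by
    ext a
    simp only [Set.mem_setOf_eq, Set.mem_pi, Set.mem_univ, true_implies]
    constructor
    · intro h i
      by_cases hi : i ∈ I
      · simp [hi, h i hi]
      · simp [hi]
    · intro h i hi
      have := h i
      simpa [hi] using this
  rw [hset, Measure.pi_pi]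
  have heq : ∀ i : Fin n, bernoulliBool p (if i ∈ I then ({false} : Set Bool) else Set.univ)
      = if i ∈ I then ENNReal.ofReal (1 - p) else 1 := by
    intro i
    by_cases hi : i ∈ I
    · simp [hi, bernoulliBool_false]
    · simp only [if_neg hi]
      exact measure_univ
  simp_rw [heq]
  rw [Finset.prod_ite_mem, Finset.prod_const, Finset.univ_inter]

lemma nat_cube_le (n : ℕ) (hn : 12 ≤ n) : 2 * n ^ 3 ≤ 2 ^ n := by
  induction n with
  | zero => omega
  | succ k ih =>
    rcases Nat.lt_or_ge k 12 with h | h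
    · have hk : k = 11 := by omega
      subst hk
      norm_num
    · calc 2 * (k + 1) ^ 3 ≤ 2 * (2 * k ^ 3) := by
            nlinarith [Nat.mul_le_mul_right (k * k) h, Nat.mul_le_mul_right k h]
        _ ≤ 2 * 2 ^ k := by omega
        _ = 2 ^ (k + 1) := by ring

lemma gauss_pi_slab' (n : ℕ) (b : Fin n → ℝ) (i : Fin n) (κ ε : ℝ)
    (hκ : 0 < κ) (hb : κ ≤ b i) :
    stdGaussianPi n {g | (∑ j, b j * g j) ∈ Set.Ioo (-ε) ε} ≤
      ENNReal.ofReal (2 * ε / (κ * Real.sqrt (2 * Real.pi))) := by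
  cases n with
  | zero => exact i.elim0
  | succ m => exact gauss_pi_slab m b i κ ε hκ hb

/-- Anti-concentration of the linear part (Lemma inside Lemma 5.2): for
sufficiently large `n`, with `A = Σᵢ cᵢ`, `β = 1/log n`, `δ = 2^{-n}`,
`I = {i : cᵢ > A/n²}` and `r = (a₁ g₁, …, aₙ gₙ)` with `aᵢ` Bernoulli(β) bits
and `gᵢ` i.i.d. standard Gaussians, if `A ≤ 0` or `|I| ≥ 1/β²` then
`Pr[f₁(r) ∈ (-δA, δA)] ≤ 2/n`. -/
theorem stmt13 :
    ∃ N : ℕ, ∀ n ≥ N, ∀ cf : Fin n → ℝ,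
      ((∑ i, cf i) ≤ 0 ∨
        1 / (1 / Real.log n) ^ 2 ≤
          ((Finset.univ.filter fun i : Fin n => (∑ j, cf j) / (n : ℝ) ^ 2 < cf i).card : ℝ)) →
      ((Measure.pi fun _ : Fin n => bernoulliBool (1 / Real.log n)).prod (stdGaussianPi n))
          {ω | (∑ i, cf i * if ω.1 i then ω.2 i else 0) ∈
            Set.Ioo (-((2 : ℝ) ^ (-(n : ℤ)) * ∑ i, cf i))
              ((2 : ℝ) ^ (-(n : ℤ)) * ∑ i, cf i)} ≤
        ENNReal.ofReal (2 / n) := by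
  refine ⟨100, fun n hn cf hyp => ?_⟩
  have hn12 : (12 : ℕ) ≤ n := by omega
  have hn0 : (0 : ℝ) < n := by
    have : (100 : ℝ) ≤ n := by exact_mod_cast hn
    linarith
  set A := ∑ i, cf i with hA
  by_cases hA0 : A ≤ 0
  · have hempty : Set.Ioo (-((2 : ℝ) ^ (-(n : ℤ)) * A)) ((2 : ℝ) ^ (-(n : ℤ)) * A) = ∅ := by
      apply Set.Ioo_eq_empty
      have h2 : (0 : ℝ) < (2 : ℝ) ^ (-(n : ℤ)) := by positivity
      intro hlt
      nlinarith [mul_nonpos_of_nonneg_of_nonpos h2.le hA0]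
    simp only [hempty, Set.mem_empty_iff_false, Set.setOf_false, measure_empty]
    exact zero_le
  push_neg at hA0
  have hI : 1 / (1 / Real.log n) ^ 2 ≤
      ((Finset.univ.filter fun i : Fin n => A / (n : ℝ) ^ 2 < cf i).card : ℝ) := by
    rcases hyp with h | h
    · exact absurd h (not_le.mpr hA0)
    · exact h
  clear hyp
  set L := Real.log n with hL
  have hlog : 1 < L := by
    rw [hL, Real.lt_log_iff_exp_lt hn0]
    have := Real.exp_one_lt_d9
    have h100 : (100 : ℝ) ≤ n := by exact_mod_cast hn
    linarith
  set β := 1 / L with hβ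
  have hβ0 : 0 < β := by rw [hβ]; positivity
  have hβ1 : β < 1 := by
    rw [hβ, div_lt_one (by linarith)]
    exact hlog
  set I := Finset.univ.filter fun i : Fin n => A / (n : ℝ) ^ 2 < cf i with hIdef
  -- measurability of the event
  have hfun : Measurable fun ω : (Fin n → Bool) × (Fin n → ℝ) =>
      ∑ i, cf i * if ω.1 i then ω.2 i else 0 := by
    apply Finset.measurable_sum
    intro i _
    apply Measurable.const_mul
    have hm : MeasurableSet {ω : (Fin n → Bool) × (Fin n → ℝ) | ω.1 i = true} := by
      have h1 : Measurable fun ω : (Fin n → Bool) × (Fin n → ℝ) => ω.1 i :=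
        (measurable_pi_apply i).comp measurable_fst
      exact measurableSet_preimage h1 (measurableSet_singleton true)
    exact Measurable.ite hm ((measurable_pi_apply i).comp measurable_snd) measurable_const
  have hE : MeasurableSet {ω : (Fin n → Bool) × (Fin n → ℝ) |
      (∑ i, cf i * if ω.1 i then ω.2 i else 0) ∈
        Set.Ioo (-((2 : ℝ) ^ (-(n : ℤ)) * A)) ((2 : ℝ) ^ (-(n : ℤ)) * A)} :=
    hfun measurableSet_Ioo
  haveI hprobB : IsProbabilityMeasure (bernoulliBool β) := bernoulliBool_prob β hβ0.le hβ1.le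
  set F : Set (Fin n → Bool) := {a | ∀ i ∈ I, a i = false} with hFdef
  have hFmeas : MeasurableSet F := by
    have hFeq : F = ⋂ i ∈ I, {a : Fin n → Bool | a i = false} := by
      ext a
      simp [hFdef]
    rw [hFeq]
    apply MeasurableSet.biInter (I.countable_toSet)
    intro i _
    have h1 : Measurable fun a : Fin n → Bool => a i := measurable_pi_apply i
    exact measurableSet_preimage h1 (measurableSet_singleton false)
  set K : ℝ≥0∞ := ENNReal.ofReal (2 * ((2 : ℝ) ^ (-(n : ℤ)) * A) /
      ((A / (n : ℝ) ^ 2) * Real.sqrt (2 * Real.pi))) with hK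
  rw [Measure.prod_apply hE]
  have step1 : ∫⁻ a, stdGaussianPi n (Prod.mk a ⁻¹'
      {ω : (Fin n → Bool) × (Fin n → ℝ) |
        (∑ i, cf i * if ω.1 i then ω.2 i else 0) ∈
          Set.Ioo (-((2 : ℝ) ^ (-(n : ℤ)) * A)) ((2 : ℝ) ^ (-(n : ℤ)) * A)})
      ∂(Measure.pi fun _ : Fin n => bernoulliBool β)
      ≤ ∫⁻ a, (F.indicator (fun _ => (1 : ℝ≥0∞)) a + K)
        ∂(Measure.pi fun _ : Fin n => bernoulliBool β) := by
    apply lintegral_mono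
    intro a
    dsimp only
    by_cases hFa : a ∈ F
    · rw [Set.indicator_of_mem hFa]
      exact le_trans prob_le_one le_self_add
    · have : ∃ i ∈ I, a i = true := by
        rw [hFdef] at hFa
        simp only [Set.mem_setOf_eq, not_forall] at hFa
        obtain ⟨i, hi, hne⟩ := hFa
        exact ⟨i, hi, by simpa using hne⟩
      obtain ⟨i, hiI, hai⟩ := this
      have hsl : (Prod.mk a ⁻¹'
          {ω : (Fin n → Bool) × (Fin n → ℝ) |
            (∑ i, cf i * if ω.1 i then ω.2 i else 0) ∈
              Set.Ioo (-((2 : ℝ) ^ (-(n : ℤ)) * A)) ((2 : ℝ) ^ (-(n : ℤ)) * A)})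
          = {g : Fin n → ℝ | (∑ j, (if a j then cf j else 0) * g j) ∈
              Set.Ioo (-((2 : ℝ) ^ (-(n : ℤ)) * A)) ((2 : ℝ) ^ (-(n : ℤ)) * A)} := by
        ext g
        simp only [Set.mem_preimage, Set.mem_setOf_eq]
        have hsum : (∑ j, cf j * if a j then g j else 0)
            = ∑ j, (if a j then cf j else 0) * g j :=
          Finset.sum_congr rfl fun j _ => by by_cases h : a j <;> simp [h]
        rw [hsum]
      rw [hsl]
      have hκpos : 0 < A / (n : ℝ) ^ 2 := div_pos hA0 (by positivity)
      have hbi : A / (n : ℝ) ^ 2 ≤ (if a i then cf i else 0) := by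
        rw [if_pos hai]
        have := (Finset.mem_filter.mp hiI).2
        linarith
      refine le_trans (gauss_pi_slab' n _ i (A / (n : ℝ) ^ 2)
        ((2 : ℝ) ^ (-(n : ℤ)) * A) hκpos hbi) ?_
      exact le_add_self
  refine le_trans step1 ?_
  have step2 : ∫⁻ a, (F.indicator (fun _ => (1 : ℝ≥0∞)) a + K)
      ∂(Measure.pi fun _ : Fin n => bernoulliBool β)
      = (Measure.pi fun _ : Fin n => bernoulliBool β) F + K := by
    rw [lintegral_add_right _ measurable_const, lintegral_indicator hFmeas,
      setLIntegral_one, lintegral_const, measure_univ, mul_one]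
  rw [step2]
  -- bound the two terms
  have hterm1 : (Measure.pi fun _ : Fin n => bernoulliBool β) F ≤ ENNReal.ofReal (1 / n) := by
    rw [hFdef, bern_pi_allfalse n β hβ0.le hβ1.le I,
      ← ENNReal.ofReal_pow (by linarith : (0:ℝ) ≤ 1 - β)]
    apply ENNReal.ofReal_le_ofReal
    have hL2 : L ^ 2 ≤ (I.card : ℝ) := by
      have heq : 1 / (1 / L) ^ 2 = L ^ 2 := by
        field_simp
      rw [heq] at hI
      exact hI
    have e1 : 1 - β ≤ rexp (-β) := by
      have := Real.add_one_le_exp (-β)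
      linarith
    have e2 : (1 - β) ^ I.card ≤ rexp (-β) ^ I.card :=
      pow_le_pow_left₀ (by linarith) e1 _
    have e3 : rexp (-β) ^ I.card = rexp ((I.card : ℝ) * (-β)) := by
      rw [← Real.exp_nat_mul]
    have hL2b : L ^ 2 * β = L := by
      rw [hβ]
      field_simp
    have e4 : (I.card : ℝ) * (-β) ≤ -L := by
      have h5 : L ^ 2 * β ≤ (I.card : ℝ) * β := mul_le_mul_of_nonneg_right hL2 hβ0.le
      nlinarith
    have e5 : rexp (-L) = 1 / n := by
      rw [hL, Real.exp_neg, Real.exp_log hn0, one_div]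
    calc (1 - β) ^ I.card ≤ rexp ((I.card : ℝ) * (-β)) := by rw [← e3]; exact e2
      _ ≤ rexp (-L) := Real.exp_le_exp.mpr e4
      _ = 1 / n := e5
  have hterm2 : K ≤ ENNReal.ofReal (1 / n) := by
    rw [hK]
    apply ENNReal.ofReal_le_ofReal
    have hsq1 : 1 ≤ Real.sqrt (2 * Real.pi) := by
      rw [show (1:ℝ) = Real.sqrt 1 from (Real.sqrt_one).symm]
      exact Real.sqrt_le_sqrt (by nlinarith [Real.pi_gt_three])
    have hAne : A ≠ 0 := ne_of_gt hA0
    have hnne : (n : ℝ) ≠ 0 := ne_of_gt hn0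
    have heq : 2 * ((2 : ℝ) ^ (-(n : ℤ)) * A) / ((A / (n : ℝ) ^ 2) * Real.sqrt (2 * Real.pi))
        = (2 * (n : ℝ) ^ 2 / (2 : ℝ) ^ n) / Real.sqrt (2 * Real.pi) := by
      rw [zpow_neg, zpow_natCast]
      have hsqne : Real.sqrt (2 * Real.pi) ≠ 0 := by positivity
      field_simp
    rw [heq]
    have h2n : (0 : ℝ) < 2 ^ n := by positivity
    have hnat : (2 * (n : ℝ) ^ 3) ≤ 2 ^ n := by exact_mod_cast nat_cube_le n hn12
    calc (2 * (n : ℝ) ^ 2 / (2 : ℝ) ^ n) / Real.sqrt (2 * Real.pi)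
        ≤ 2 * (n : ℝ) ^ 2 / (2 : ℝ) ^ n := div_le_self (by positivity) hsq1
      _ ≤ 1 / n := by
          rw [div_le_div_iff₀ h2n hn0]
          nlinarith
  calc (Measure.pi fun _ : Fin n => bernoulliBool β) F + K
      ≤ ENNReal.ofReal (1 / n) + ENNReal.ofReal (1 / n) := add_le_add hterm1 hterm2
    _ = ENNReal.ofReal (2 / n) := by
        rw [← ENNReal.ofReal_add (by positivity) (by positivity)]
        congr 1
        ring
end

section
/- Let L = (U,V,E,k,m,Π) be a Label Cover instance with m ≥ 2. If opt(L) = 1, then there exists a folded degree-2 polynomial p on ℝ^{dim} (dim = |U|k + |V|m) such that sgn(p(y)) = b with probability at least 1 − 1/log m over labeled examples (y,b) drawn from the Label Cover reduction distribution. -/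
open MeasureTheory ProbabilityTheory Real
open scoped ENNReal NNReal

/-- The folding vector `b(e, i) ∈ ℝ^{dim}` of the Label Cover reduction:
coordinate `1` at `y_u^{(i)}` (for `u` the `U`-endpoint of `e`), coordinate `-1`
at `y_v^{(j)}` for every `j ∈ (π^e)⁻¹(i)` (for `v` the `V`-endpoint of `e`), and
`0` elsewhere.  Coordinates are indexed by `U × Fin k ⊕ V × Fin m`. -/
def foldVec {U V : Type} [DecidableEq U] [DecidableEq V] {k m : ℕ}
    (pe : U × V → Fin m → Fin k) (e : U × V) (i : Fin k) :
    (U × Fin k) ⊕ (V × Fin m) → ℝ :=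
  Sum.elim (fun ui => if ui = (e.1, i) then 1 else 0)
    (fun vj => if vj.1 = e.2 ∧ pe e vj.2 = i then -1 else 0)

/-- The folding subspace `H`: the span of all the vectors `b(e, i)` with
`e ∈ E` and `i ∈ [k]`. -/
def foldSpace {U V : Type} [DecidableEq U] [DecidableEq V] {k m : ℕ}
    (E : Finset (U × V)) (pe : U × V → Fin m → Fin k) :
    Submodule ℝ ((U × Fin k) ⊕ (V × Fin m) → ℝ) :=
  Submodule.span ℝ {x | ∃ e ∈ E, ∃ i : Fin k, x = foldVec pe e i}

/-- A function `p : ℝ^{dim} → ℝ` is folded if `p(x + h) = p(x)` for every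
`x ∈ ℝ^{dim}` and `h ∈ H`. -/
def Folded {U V : Type} [DecidableEq U] [DecidableEq V] {k m : ℕ}
    (E : Finset (U × V)) (pe : U × V → Fin m → Fin k)
    (p : ((U × Fin k) ⊕ (V × Fin m) → ℝ) → ℝ) : Prop :=
  ∀ (x h : (U × Fin k) ⊕ (V × Fin m) → ℝ), h ∈ foldSpace E pe → p (x + h) = p x

/-- The sample distribution of the Label Cover reduction: a uniform random
vertex `v ∈ V`, `m` independent Bernoulli(β) bits `a` with `β = 1/log m`, `m`
i.i.d. standard Gaussians `g`, a uniform exponent `i ∈ {1, …, (log m)²}`, and a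
uniform sign `b ∈ {-1, 1}`. -/
noncomputable def LCMeasure (V : Type) [Fintype V] [MeasurableSpace V] (m : ℕ) :
    Measure (V × (Fin m → Bool) × (Fin m → ℝ) × ℕ × ℝ) :=
  (uniformFinset (Finset.univ : Finset V)).prod
    ((Measure.pi fun _ : Fin m => bernoulliBool (1 / Real.log m)).prod
      ((stdGaussianPi m).prod
        ((uniformFinset (Finset.Icc 1 ⌊(Real.log m) ^ 2⌋₊)).prod signUnif)))

/-- The labeled example `y ∈ ℝ^{dim}` of the Label Cover reduction from the
sample `ω = (v, a, g, i, b)`: all blocks other than that of `v` are zero, and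
`y_v = t³ r + b t² δ ω₀` with `r = (a₁ g₁, …, a_m g_m)`, `t = m^i`, `δ = 2^{-m}`
and `ω₀ = (1, …, 1)`. -/
noncomputable def LCPoint {U V : Type} [DecidableEq V] (k m : ℕ)
    (ω : V × (Fin m → Bool) × (Fin m → ℝ) × ℕ × ℝ) :
    (U × Fin k) ⊕ (V × Fin m) → ℝ :=
  Sum.elim (fun _ => 0)
    (fun vj => if vj.1 = ω.1 then
        ((m : ℝ) ^ ω.2.2.2.1) ^ 3 * (if ω.2.1 vj.2 then ω.2.2.1 vj.2 else 0)
          + ω.2.2.2.2 * ((m : ℝ) ^ ω.2.2.2.1) ^ 2 * (2 : ℝ) ^ (-(m : ℤ))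
      else 0)

section AuxPoly

lemma polyEval_single {ι : Type*} (S : Multiset ι) (a : ℝ) (x : ι → ℝ) :
    polyEval (Finsupp.single S a) x = a * (S.map x).prod := by
  unfold polyEval
  rcases eq_or_ne a 0 with rfl | ha
  · simp
  · rw [Finsupp.support_single_ne_zero _ ha]; simp

lemma polyEval_add {ι : Type*} (c₁ c₂ : Multiset ι →₀ ℝ) (x : ι → ℝ) :
    polyEval (c₁ + c₂) x = polyEval c₁ x + polyEval c₂ x := by
  have h : ∀ c : Multiset ι →₀ ℝ, polyEval c x = c.sum (fun S a => a * (S.map x).prod) :=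
    fun c => rfl
  rw [h, h, h, Finsupp.sum_add_index']
  · intro S; ring
  · intro S b₁ b₂; ring

lemma polyEval_finsetSum {ι σ : Type*} (s : Finset σ) (φ : σ → Multiset ι →₀ ℝ) (x : ι → ℝ) :
    polyEval (∑ a ∈ s, φ a) x = ∑ a ∈ s, polyEval (φ a) x := by
  induction s using Finset.cons_induction with
  | empty => simp [polyEval]
  | cons a s ha ih => rw [Finset.sum_cons, Finset.sum_cons, polyEval_add, ih]

lemma smul_prod'' {α β : Type*} [MeasurableSpace α] [MeasurableSpace β]
    (c : ℝ≥0∞) (μ : Measure α) [SFinite μ] (ν : Measure β) [SFinite ν] :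
    (c • μ).prod ν = c • (μ.prod ν) := by
  ext s hs
  rw [Measure.prod_apply hs, Measure.smul_apply, Measure.prod_apply hs,
    lintegral_smul_measure, smul_eq_mul]

end AuxPoly

/-- Completeness of the Label Cover reduction (Lemma 5.5): if the regular
bipartite Label Cover instance `(U, V, E, k, m, Π)` with `m ≥ 2` has a labeling
satisfying all edges, then some folded degree-2 polynomial `p` on `ℝ^{dim}`
satisfies `sgn(p(y)) = b` with probability at least `1 - 1/log m` over the
reduction distribution. -/

theorem stmt15 {U V : Type} [Fintype U] [Fintype V] [DecidableEq U] [DecidableEq V]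
    [MeasurableSpace U] [MeasurableSpace V]
    (k m : ℕ) (hk : 1 ≤ k) (hm : 2 ≤ m)
    (E : Finset (U × V)) (hE : E.Nonempty)
    (pe : U × V → Fin m → Fin k)
    (dU dV : ℕ) (hdU : 0 < dU) (hdV : 0 < dV)
    (hregU : ∀ u : U, (E.filter fun e => e.1 = u).card = dU)
    (hregV : ∀ v : V, (E.filter fun e => e.2 = v).card = dV)
    (ℓu : U → Fin k) (ℓv : V → Fin m)
    (hopt : ∀ e ∈ E, pe e (ℓv e.2) = ℓu e.1) :
    ∃ c : Multiset ((U × Fin k) ⊕ (V × Fin m)) →₀ ℝ,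
      (∀ S ∈ c.support, Multiset.card S ≤ 2) ∧
      Folded E pe (polyEval c) ∧
      ENNReal.ofReal (1 - 1 / Real.log m) ≤
        LCMeasure V m
          {ω | Real.sign (polyEval c (LCPoint k m ω)) = ω.2.2.2.2} := by

  classical
  -- the coefficient function: the folded linear polynomial
  set cf : Multiset ((U × Fin k) ⊕ (V × Fin m)) →₀ ℝ :=
    (∑ u : U, Finsupp.single ({Sum.inl (u, ℓu u)} : Multiset ((U × Fin k) ⊕ (V × Fin m))) 1)
      + (∑ v : V, Finsupp.single ({Sum.inr (v, ℓv v)} : Multiset ((U × Fin k) ⊕ (V × Fin m))) 1)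
    with hcf
  have hEval : ∀ x : (U × Fin k) ⊕ (V × Fin m) → ℝ,
      polyEval cf x = (∑ u : U, x (Sum.inl (u, ℓu u))) + ∑ v : V, x (Sum.inr (v, ℓv v)) := by
    intro x
    rw [hcf, polyEval_add, polyEval_finsetSum, polyEval_finsetSum]
    simp [polyEval_single]
  refine ⟨cf, ?_, ?_, ?_⟩
  · -- degree at most 2
    intro S hS
    by_contra hcard
    push_neg at hcard
    have hone : ∀ q : (U × Fin k) ⊕ (V × Fin m),
        (Finsupp.single ({q} : Multiset ((U × Fin k) ⊕ (V × Fin m))) (1:ℝ)) S = 0 := by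
      intro q
      apply Finsupp.single_eq_of_ne'
      intro hq
      rw [← hq] at hcard
      simp at hcard
    have : cf S = 0 := by
      simp only [hcf, Finsupp.add_apply, Finsupp.finset_sum_apply, hone,
        Finset.sum_const_zero, add_zero]
    exact (Finsupp.mem_support_iff.mp hS) this
  · -- foldedness
    have hker : ∀ h ∈ foldSpace E pe,
        (∑ u : U, h (Sum.inl (u, ℓu u))) + ∑ v : V, h (Sum.inr (v, ℓv v)) = 0 := by
      set L : ((U × Fin k) ⊕ (V × Fin m) → ℝ) →ₗ[ℝ] ℝ :=
        { toFun := fun x => (∑ u : U, x (Sum.inl (u, ℓu u))) + ∑ v : V, x (Sum.inr (v, ℓv v)),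
          map_add' := by
            intro x y
            simp only [Pi.add_apply]
            rw [Finset.sum_add_distrib, Finset.sum_add_distrib]
            ring
          map_smul' := by
            intro c x
            simp only [Pi.smul_apply, smul_eq_mul, RingHom.id_apply]
            rw [mul_add, Finset.mul_sum, Finset.mul_sum] } with hL
      have hle : foldSpace E pe ≤ LinearMap.ker L := by
        rw [foldSpace, Submodule.span_le]
        rintro x ⟨e, he, i, rfl⟩
        simp only [SetLike.mem_coe, LinearMap.mem_ker, hL, LinearMap.coe_mk, AddHom.coe_mk]
        have h1 : (∑ u : U, foldVec pe e i (Sum.inl (u, ℓu u)))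
            = if ℓu e.1 = i then (1:ℝ) else 0 := by
          simp [foldVec, Prod.ext_iff, ite_and, Finset.sum_ite_eq']
        have h2 : (∑ v : V, foldVec pe e i (Sum.inr (v, ℓv v)))
            = if ℓu e.1 = i then (-1:ℝ) else 0 := by
          rw [show ℓu e.1 = pe e (ℓv e.2) from (hopt e he).symm]
          simp [foldVec, ite_and, Finset.sum_ite_eq', eq_comm]
        rw [h1, h2]
        split <;> ring
      intro h hh
      exact hle hh
    intro x h hh
    rw [hEval, hEval]
    have h0 := hker h hh
    simp only [Pi.add_apply, Finset.sum_add_distrib]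
    linarith
  · -- the probability bound
    obtain ⟨e0, he0⟩ := hE
    haveI : Nonempty V := ⟨e0.2⟩
    by_cases hm3 : 3 ≤ m
    · -- main case
      have hmR : (3:ℝ) ≤ (m:ℝ) := by exact_mod_cast hm3
      have hm0 : (0:ℝ) < m := by linarith
      have hlog1 : 1 ≤ Real.log m := by
        rw [Real.le_log_iff_exp_le hm0]
        linarith [Real.exp_one_lt_d9]
      have hlogpos : (0:ℝ) < Real.log m := by linarith
      have hβpos : 0 < 1 / Real.log m := by positivity
      have hβle : 1 / Real.log m ≤ 1 := by
        rw [div_le_one hlogpos]; linarith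
      set β := 1 / Real.log m with hβ
      -- probability measure instances
      haveI instbern : IsProbabilityMeasure (bernoulliBool β) := by
        constructor
        rw [bernoulliBool]
        simp only [Measure.coe_add, Measure.coe_smul, Pi.add_apply, Pi.smul_apply,
          measure_univ, smul_eq_mul, mul_one]
        rw [← ENNReal.ofReal_add hβpos.le (by linarith)]
        norm_num
      haveI instμa : IsProbabilityMeasure (Measure.pi fun _ : Fin m => bernoulliBool β) :=
        inferInstance
      haveI instμg : IsProbabilityMeasure (stdGaussianPi m) := by
        rw [stdGaussianPi]; infer_instance
      have hufprob : ∀ (s : Finset ℕ), s.Nonempty → IsProbabilityMeasure (uniformFinset s) := by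
        intro s hs
        constructor
        rw [uniformFinset, Measure.smul_apply, Measure.finset_sum_apply]
        simp only [measure_univ, Finset.sum_const, nsmul_eq_mul, mul_one, smul_eq_mul]
        exact ENNReal.inv_mul_cancel (by exact_mod_cast hs.card_pos.ne') (ENNReal.natCast_ne_top _)
      have hn1 : 1 ≤ ⌊(Real.log m) ^ 2⌋₊ := Nat.le_floor (by push_cast; nlinarith)
      haveI instμi : IsProbabilityMeasure (uniformFinset (Finset.Icc 1 ⌊(Real.log m) ^ 2⌋₊)) :=
        hufprob _ ⟨1, by simp [hn1]⟩
      haveI instμb : IsProbabilityMeasure signUnif := by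
        constructor
        rw [signUnif]
        simp only [Measure.coe_add, Measure.coe_smul, Pi.add_apply, Pi.smul_apply,
          measure_univ, smul_eq_mul, mul_one]
        exact ENNReal.inv_two_add_inv_two
      set ν : Measure ((Fin m → Bool) × (Fin m → ℝ) × ℕ × ℝ) :=
        (Measure.pi fun _ : Fin m => bernoulliBool β).prod
          ((stdGaussianPi m).prod
            ((uniformFinset (Finset.Icc 1 ⌊(Real.log m) ^ 2⌋₊)).prod signUnif)) with hν
      set Sev : Set (V × (Fin m → Bool) × (Fin m → ℝ) × ℕ × ℝ) :=
        {ω | Real.sign (polyEval cf (LCPoint k m ω)) = ω.2.2.2.2} with hSev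
      have hLC : LCMeasure V m = (Fintype.card V : ℝ≥0∞)⁻¹ •
          Measure.sum (fun v : V => ν.map (Prod.mk v)) := by
        rw [LCMeasure, uniformFinset, Finset.card_univ, ← Measure.sum_fintype,
          smul_prod'', Measure.prod_sum_left]
        simp only [Measure.dirac_prod]
        rfl
      -- the per-vertex bound
      have hAv : ∀ v : V, ENNReal.ofReal (1 - β) ≤ ν (Prod.mk v ⁻¹' Sev) := by
        intro v
        have hsub : ({a : Fin m → Bool | a (ℓv v) = false} ×ˢ
            ((Set.univ : Set (Fin m → ℝ)) ×ˢ ((Set.univ : Set ℕ) ×ˢ ({1, -1} : Set ℝ))))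
            ⊆ Prod.mk v ⁻¹' Sev := by
          rintro ⟨a, g, i, b⟩ ⟨ha, -, -, hb⟩
          simp only [Set.mem_setOf_eq] at ha
          simp only [Set.mem_insert_iff, Set.mem_singleton_iff] at hb
          simp only [Set.mem_preimage, hSev, Set.mem_setOf_eq]
          rw [hEval]
          have hL1 : (∑ u : U, LCPoint (U := U) (V := V) k m (v, a, g, i, b)
              (Sum.inl (u, ℓu u))) = 0 := by
            simp [LCPoint]
          have hL2 : (∑ v' : V, LCPoint (U := U) (V := V) k m (v, a, g, i, b)
              (Sum.inr (v', ℓv v'))) = b * ((m:ℝ) ^ i) ^ 2 * (2:ℝ) ^ (-(m:ℤ)) := by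
            simp only [LCPoint, Sum.elim_inr]
            rw [Finset.sum_ite_eq' Finset.univ v]
            simp [ha]
          rw [hL1, hL2, zero_add]
          have hpos : (0:ℝ) < ((m:ℝ) ^ i) ^ 2 * (2:ℝ) ^ (-(m:ℤ)) := by positivity
          rcases hb with rfl | rfl
          · have he : (1:ℝ) * ((m:ℝ) ^ i) ^ 2 * (2:ℝ) ^ (-(m:ℤ))
                = ((m:ℝ) ^ i) ^ 2 * (2:ℝ) ^ (-(m:ℤ)) := by ring
            rw [he]
            exact Real.sign_of_pos hpos
          · have he : (-1:ℝ) * ((m:ℝ) ^ i) ^ 2 * (2:ℝ) ^ (-(m:ℤ))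
                = -(((m:ℝ) ^ i) ^ 2 * (2:ℝ) ^ (-(m:ℤ))) := by ring
            rw [he]
            exact Real.sign_of_neg (by linarith)
        refine le_trans (le_of_eq ?_) (measure_mono hsub)
        rw [hν, Measure.prod_prod, Measure.prod_prod, Measure.prod_prod]
        have hμb : signUnif ({1, -1} : Set ℝ) = 1 := by
          rw [signUnif]
          simp only [Measure.coe_add, Measure.coe_smul, Pi.add_apply, Pi.smul_apply,
            smul_eq_mul]
          rw [Measure.dirac_apply_of_mem (by simp), Measure.dirac_apply_of_mem (by simp)]
          simpa using ENNReal.inv_two_add_inv_two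
        have hSa : {a : Fin m → Bool | a (ℓv v) = false} =
            Set.pi Set.univ (fun j => if j = ℓv v then ({false} : Set Bool) else Set.univ) := by
          ext a
          simp only [Set.mem_setOf_eq, Set.mem_pi, Set.mem_univ, true_implies]
          constructor
          · intro h j
            by_cases hj : j = ℓv v <;> simp [hj, h]
          · intro h
            have := h (ℓv v)
            simpa using this
        have hμa : (Measure.pi fun _ : Fin m => bernoulliBool β)
            {a : Fin m → Bool | a (ℓv v) = false} = ENNReal.ofReal (1 - β) := by
          rw [hSa, Measure.pi_pi]
          have hfalse : bernoulliBool β ({false} : Set Bool) = ENNReal.ofReal (1 - β) := by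
            rw [bernoulliBool]
            simp [Measure.dirac_apply]
          rw [Finset.prod_eq_single (ℓv v) (fun j _ hj => by rw [if_neg hj]; exact measure_univ)
            (fun h => absurd (Finset.mem_univ _) h)]
          rw [if_pos rfl, hfalse]
        rw [hμa, hμb, measure_univ, measure_univ]
        ring
      -- assemble
      rw [hLC, Measure.smul_apply, smul_eq_mul]
      have hcard0 : (Fintype.card V : ℝ≥0∞) ≠ 0 := by
        simp [Fintype.card_ne_zero]
      have h1 : (Fintype.card V : ℝ≥0∞) * ENNReal.ofReal (1 - β) ≤
          Measure.sum (fun v : V => ν.map (Prod.mk v)) Sev := by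
        refine le_trans ?_ (Measure.le_sum_apply _ _)
        rw [tsum_fintype]
        calc (Fintype.card V : ℝ≥0∞) * ENNReal.ofReal (1 - β)
            = ∑ _v : V, ENNReal.ofReal (1 - β) := by
              rw [Finset.sum_const, Finset.card_univ, nsmul_eq_mul]
          _ ≤ ∑ v : V, (ν.map (Prod.mk v)) Sev :=
              Finset.sum_le_sum fun v _ => le_trans (hAv v)
                (Measure.le_map_apply measurable_prodMk_left.aemeasurable _)
      calc ENNReal.ofReal (1 - β)
          = (Fintype.card V : ℝ≥0∞)⁻¹ * ((Fintype.card V : ℝ≥0∞) * ENNReal.ofReal (1 - β)) := by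
            rw [← mul_assoc, ENNReal.inv_mul_cancel hcard0 (ENNReal.natCast_ne_top _), one_mul]
        _ ≤ _ := mul_le_mul_right h1 _
    · -- m = 2 : trivial since 1 - 1/log 2 < 0
      have hm2 : m = 2 := by omega
      have hlog2 : Real.log m < 1 := by
        rw [hm2]
        have := Real.log_two_lt_d9
        norm_num at this ⊢
        linarith
      have hlogpos : (0:ℝ) < Real.log m := by
        rw [hm2]; exact Real.log_pos (by norm_num)
      have : 1 - 1 / Real.log m ≤ 0 := by
        have h1 : 1 < 1 / Real.log m := by
          rw [lt_div_iff₀ hlogpos]; linarith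
        linarith
      rw [ENNReal.ofReal_eq_zero.mpr this]
      exact zero_le
end
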